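/- Let N ≥ 2 be an integer that is not prime, and let p be a prime number dividing N. If p ∈ {13, 43, 83, 197, 293, 307, 547, 587, 643, 757, 797, 827, 853, 883}, then N is monomially reducible. -/
import Mathlib

set_option maxRecDepth 40000


namespace Monomial

/-- The elementary matrix `[[a, -1], [1, 0]]` over `ZMod N`. -/
def mat {N : ℕ} (a : ZMod N) : Matrix (Fin 2) (Fin 2) (ZMod N) := !![a, -1; 1, 0]

/-- `M [a₁, …, aₙ] = mat aₙ * ⋯ * mat a₁`. -/
def M {N : ℕ} (l : List (ZMod N)) : Matrix (Fin 2) (Fin 2) (ZMod N) :=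
  (l.reverse.map mat).prod

/-- A tuple is a solution of (E_N) if the associated matrix is `±Id`. -/
def IsSolution {N : ℕ} (l : List (ZMod N)) : Prop := M l = 1 ∨ M l = -1

/-- The sum `(a₁,…,aₙ) ⊕ (b₁,…,bₘ) = (a₁+bₘ, a₂,…,aₙ₋₁, aₙ+b₁, b₂,…,bₘ₋₁)`. -/
def osum {N : ℕ} (u v : List (ZMod N)) : List (ZMod N) :=
  (u.headI + v.getLastD 0) ::
    ((u.drop 1).dropLast ++ (u.getLastD 0 + v.headI) :: (v.drop 1).dropLast)

/-- Equivalence: `v` is a cyclic permutation of `u` or of the reversal of `u`. -/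
def CyclicEquiv {N : ℕ} (u v : List (ZMod N)) : Prop :=
  (∃ i, v = u.rotate i) ∨ (∃ i, v = u.reverse.rotate i)

/-- A tuple is reducible if, up to equivalence, it is a sum of an `m`-tuple (`m ≥ 3`)
with a solution of size `l ≥ 3`. -/
def Reducible {N : ℕ} (c : List (ZMod N)) : Prop :=
  ∃ a b : List (ZMod N), 3 ≤ a.length ∧ 3 ≤ b.length ∧ IsSolution b ∧
    CyclicEquiv c (osum a b)

/-- An irreducible solution: a solution which is not reducible (and `(0,0)` is
not considered irreducible). -/
def IrreducibleSol {N : ℕ} (c : List (ZMod N)) : Prop :=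
  IsSolution c ∧ ¬ Reducible c ∧ c ≠ [0, 0]

/-- The size of the `k`-monomial minimal solution of (E_N): the least `n > 0` such
that the constant `n`-tuple `(k, …, k)` is a solution. -/
noncomputable def monomialMinimalSize (N : ℕ) (k : ZMod N) : ℕ :=
  sInf {n | 0 < n ∧ IsSolution (List.replicate n k)}

/-- `N` is monomially irreducible if, for every `k ≠ 0`, the `k`-monomial minimal
solution of (E_N) is irreducible. -/
def MonomiallyIrreducible (N : ℕ) : Prop :=
  ∀ k : ZMod N, k ≠ 0 → IrreducibleSol (List.replicate (monomialMinimalSize N k) k)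

/-- The continuant `Kₙ(x, …, x)` at a constant tuple: `K₀ = 1`, `K₁ = x`,
`Kₙ₊₂ = x * Kₙ₊₁ - Kₙ`. -/
def K {N : ℕ} (x : ZMod N) : ℕ → ZMod N
  | 0 => 1
  | 1 => x
  | n + 2 => x * K x (n + 1) - K x n

/-! ### Auxiliary machinery -/

section Aux

variable {N : ℕ}

lemma K_zero (x : ZMod N) : K x 0 = 1 := rfl
lemma K_one (x : ZMod N) : K x 1 = x := rfl
lemma K_two_step (x : ZMod N) (n : ℕ) : K x (n + 2) = x * K x (n + 1) - K x n := by
  simp [K]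

/-- Shifted continuant: `J x 0 = 0`, `J x (n+1) = K x n`. -/
def J (x : ZMod N) : ℕ → ZMod N
  | 0 => 0
  | n + 1 => K x n

lemma J_zero (x : ZMod N) : J x 0 = 0 := rfl
lemma J_succ (x : ZMod N) (n : ℕ) : J x (n + 1) = K x n := rfl

lemma J_rec (x : ZMod N) (n : ℕ) : x * K x n - J x n = K x (n + 1) := by
  cases n with
  | zero => simp [K_zero, K_one, J_zero]
  | succ m => rw [J_succ, ← K_two_step]

lemma pow_mat (x : ZMod N) : ∀ n : ℕ,
    (mat x) ^ (n + 1) = !![K x (n + 1), -(K x n); K x n, -(J x n)]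
  | 0 => by
      rw [pow_one, mat]
      norm_num [K_zero, K_one, J_zero]
  | n + 1 => by
      rw [pow_succ', pow_mat x n, mat, Matrix.mul_fin_two]
      have e1 : x * K x (n + 1) + -1 * K x n = K x (n + 2) := by
        rw [K_two_step]; ring
      have e2 : x * -(K x n) + -1 * -(J x n) = -(K x (n + 1)) := by
        rw [← J_rec x n]; ring
      have e3 : 1 * K x (n + 1) + 0 * K x n = K x (n + 1) := by ring
      have e4 : (1 : ZMod N) * -(K x n) + 0 * -(J x n) = -(J x (n + 1)) := by
        rw [J_succ]; ring
      rw [e1, e2, e3, e4]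

lemma M_replicate (x : ZMod N) (n : ℕ) : M (List.replicate n x) = (mat x) ^ n := by
  unfold M
  rw [List.reverse_replicate, List.map_replicate, List.prod_replicate]

lemma det_mat (x : ZMod N) : (mat x).det = 1 := by
  rw [mat, Matrix.det_fin_two_of]; ring

lemma det_rel (x : ZMod N) (n : ℕ) :
    K x (n + 1) * -(J x n) - -(K x n) * K x n = 1 := by
  have h : ((mat x) ^ (n + 1)).det = 1 := by
    rw [Matrix.det_pow, det_mat, one_pow]
  rw [pow_mat x n, Matrix.det_fin_two_of] at h
  exact h

lemma neg_one_fin_two :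
    (-1 : Matrix (Fin 2) (Fin 2) (ZMod N)) = !![-1, 0; 0, -1] := by
  have := Matrix.one_fin_two (α := ZMod N)
  rw [← neg_inj] at this
  rw [this]
  ext i j
  fin_cases i <;> fin_cases j <;> simp

lemma isSolution_replicate_iff (x : ZMod N) (n : ℕ) :
    IsSolution (List.replicate (n + 1) x) ↔
      K x n = 0 ∧ (K x (n + 1) = 1 ∨ K x (n + 1) = -1) := by
  rw [IsSolution, M_replicate, pow_mat]
  constructor
  · rintro (h | h)
    · rw [Matrix.one_fin_two] at h
      have h10 := congrFun (congrFun h 1) 0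
      have h00 := congrFun (congrFun h 0) 0
      simp at h10 h00
      exact ⟨h10, Or.inl h00⟩
    · rw [neg_one_fin_two] at h
      have h10 := congrFun (congrFun h 1) 0
      have h00 := congrFun (congrFun h 0) 0
      simp at h10 h00
      exact ⟨h10, Or.inr h00⟩
  · rintro ⟨hz, hs | hs⟩
    · left
      have hd := det_rel x n
      rw [hz, hs] at hd
      have hJ : J x n = -1 := by linear_combination -hd
      rw [hz, hs, hJ, Matrix.one_fin_two]
      norm_num
    · right
      have hd := det_rel x n
      rw [hz, hs] at hd
      have hJ : J x n = 1 := by linear_combination hd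
      rw [hz, hs, hJ, neg_one_fin_two]
      norm_num

lemma M_sandwich (u v x : ZMod N) (j : ℕ) :
    M (u :: (List.replicate j x ++ [v])) = mat v * ((mat x) ^ j * mat u) := by
  unfold M
  rw [List.reverse_cons, List.reverse_append, List.reverse_replicate]
  simp [List.prod_append, List.prod_cons, List.map_append, List.prod_replicate,
    mul_assoc]

lemma reducible_replicate (x ε : ZMod N) (i t : ℕ) (hε : ε = 1 ∨ ε = -1)
    (hK : K x (i + 1) = ε) :
    Reducible (List.replicate (i + 4 + t) x) := by
  set w : ZMod N := ε * K x i with hw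
  have hd := det_rel x i
  rw [hK] at hd
  refine ⟨(x - w) :: (List.replicate (t + 1) x ++ [x - w]),
          w :: (List.replicate (i + 1) x ++ [w]), ?_, ?_, ?_, ?_⟩
  · simp
  · simp
  · -- b is a solution
    have hM : M (w :: (List.replicate (i + 1) x ++ [w])) = !![-ε, 0; 0, -ε] := by
      rw [M_sandwich, pow_mat x i, hK]
      simp only [mat]
      rw [Matrix.mul_fin_two, Matrix.mul_fin_two]
      rcases hε with rfl | rfl
      · have hJ : J x i = K x i * K x i - 1 := by linear_combination -hd
        rw [hw, hJ]
        congr 1 <;> ring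
      · have hJ : J x i = 1 - K x i * K x i := by linear_combination hd
        rw [hw, hJ]
        congr 1 <;> ring
    rcases hε with rfl | rfl
    · right; rw [hM, neg_one_fin_two]
    · left; rw [hM, Matrix.one_fin_two]; norm_num
  · -- osum gives back the constant tuple
    left
    refine ⟨0, ?_⟩
    rw [List.rotate_zero]
    unfold osum
    have hxw : x - w + w = x := by ring
    have hgl1 : ((x - w) :: (List.replicate (t + 1) x ++ [x - w])).getLastD 0
        = x - w := by
      rw [List.getLastD_cons, List.getLastD_concat]
    have hgl2 : (w :: (List.replicate (i + 1) x ++ [w])).getLastD 0 = w := by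
      rw [List.getLastD_cons, List.getLastD_concat]
    rw [hgl1, hgl2]
    simp only [List.headI, List.drop_succ_cons, List.drop_zero,
      List.dropLast_concat, hxw]
    rw [show (x :: List.replicate (i + 1) x) = List.replicate (i + 2) x from rfl]
    rw [show x :: (List.replicate (t + 1) x ++ List.replicate (i + 2) x)
        = (x :: List.replicate (t + 1) x) ++ List.replicate (i + 2) x from rfl]
    rw [show (x :: List.replicate (t + 1) x) = List.replicate (t + 2) x from rfl]
    rw [← List.replicate_add]
    congr 1
    omega

lemma master {q : ℕ} (x : ZMod q) (hx : x ≠ 0) (d i : ℕ)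
    (h0 : K x d = 0) (h1 : K x (d + 1) = 1 ∨ K x (d + 1) = -1)
    (hmin : ∀ j, j < d → ¬(K x j = 0 ∧ (K x (j + 1) = 1 ∨ K x (j + 1) = -1)))
    (hw : K x (i + 1) = 1 ∨ K x (i + 1) = -1) (hi : i + 4 ≤ d + 1) :
    ¬ MonomiallyIrreducible q := by
  intro H
  obtain ⟨-, hnr, -⟩ := H x hx
  apply hnr
  have hsize : monomialMinimalSize q x = d + 1 := by
    rw [monomialMinimalSize]
    have hmem : (d + 1) ∈ {n | 0 < n ∧ IsSolution (List.replicate n x)} :=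
      ⟨Nat.succ_pos d, (isSolution_replicate_iff x d).mpr ⟨h0, h1⟩⟩
    have hle := Nat.sInf_le hmem
    obtain ⟨hpos, hsol⟩ := Nat.sInf_mem (⟨d + 1, hmem⟩ :
      Set.Nonempty {n | 0 < n ∧ IsSolution (List.replicate n x)})
    rcases Nat.lt_or_ge (sInf {n | 0 < n ∧ IsSolution (List.replicate n x)})
      (d + 1) with hlt | hge
    · exfalso
      obtain ⟨j, hj⟩ : ∃ j, sInf {n | 0 < n ∧ IsSolution (List.replicate n x)}
          = j + 1 := ⟨sInf {n | 0 < n ∧ IsSolution (List.replicate n x)} - 1,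
            by omega⟩
      rw [hj] at hsol
      exact hmin j (by omega) ((isSolution_replicate_iff x j).mp hsol)
    · exact le_antisymm hle hge
  rw [hsize]
  obtain ⟨t, ht⟩ : ∃ t, d + 1 = i + 4 + t := ⟨d + 1 - (i + 4), by omega⟩
  rw [ht]
  rcases hw with hw | hw
  · exact reducible_replicate x 1 i t (Or.inl rfl) hw
  · exact reducible_replicate x (-1) i t (Or.inr rfl) hw

/-! ### Fast computation of `K` -/

def kaux {q : ℕ} (x : ZMod q) : ℕ → ZMod q × ZMod q
  | 0 => (1, x)
  | n + 1 => ((kaux x n).2, x * (kaux x n).2 - (kaux x n).1)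

lemma kaux_eq {q : ℕ} (x : ZMod q) : ∀ n, kaux x n = (K x n, K x (n + 1))
  | 0 => by simp [kaux, K_zero, K_one]
  | n + 1 => by rw [kaux, kaux_eq x n]; simp [K_two_step]

/-! ### The universal pattern of `K` at `1` -/

def pt1 (j : ℕ) : ℤ :=
  if j % 6 = 0 then 1 else if j % 6 = 1 then 1 else if j % 6 = 2 then 0
  else if j % 6 = 3 then -1 else if j % 6 = 4 then -1 else 0

def ptz (q : ℕ) (j : ℕ) : ZMod q :=
  if j % 6 = 0 then 1 else if j % 6 = 1 then 1 else if j % 6 = 2 then 0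
  else if j % 6 = 3 then -1 else if j % 6 = 4 then -1 else 0

lemma ptz_eq (q j : ℕ) : ptz q j = ((pt1 j : ℤ) : ZMod q) := by
  unfold ptz pt1; split_ifs <;> simp

lemma pt1_cases (j : ℕ) : pt1 j = 0 ∨ pt1 j = 1 ∨ pt1 j = -1 := by
  unfold pt1; split_ifs <;> simp

lemma pt1_rec (j : ℕ) : pt1 (j + 2) = pt1 (j + 1) - pt1 j := by
  have h : j % 6 = 0 ∨ j % 6 = 1 ∨ j % 6 = 2 ∨ j % 6 = 3 ∨ j % 6 = 4 ∨
      j % 6 = 5 := by omega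
  rcases h with h | h | h | h | h | h <;>
  · have e1 : (j + 1) % 6 = (j % 6) + 1 ∨ (j + 1) % 6 = 0 := by omega
    have e2 : (j + 2) % 6 = (j % 6) + 2 ∨ (j + 2) % 6 = 0 ∨ (j + 2) % 6 = 1 :=
      by omega
    have e1' : (j + 1) % 6 = ((j % 6) + 1) % 6 := by omega
    have e2' : (j + 2) % 6 = ((j % 6) + 2) % 6 := by omega
    rw [pt1, pt1, pt1, e1', e2', h]
    norm_num

lemma K_one_pattern (m : ℕ) : ∀ j, K (1 : ZMod m) j = ((pt1 j : ℤ) : ZMod m) ∧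
    K (1 : ZMod m) (j + 1) = ((pt1 (j + 1) : ℤ) : ZMod m)
  | 0 => by
      constructor <;> norm_num [K_zero, K_one, pt1]
  | j + 1 => by
      obtain ⟨ih1, ih2⟩ := K_one_pattern m j
      refine ⟨ih2, ?_⟩
      rw [K_two_step, ih1, ih2, one_mul, pt1_rec j]
      push_cast
      ring

/-! ### `K` commutes with ring homomorphisms -/

lemma K_map {q r : ℕ} (f : ZMod q →+* ZMod r) (x : ZMod q) :
    ∀ n, f (K x n) = K (f x) n ∧ f (K x (n + 1)) = K (f x) (n + 1)
  | 0 => by constructor <;> simp [K_zero, K_one]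
  | n + 1 => by
      obtain ⟨ih1, ih2⟩ := K_map f x n
      refine ⟨ih2, ?_⟩
      rw [K_two_step, K_two_step, map_sub, map_mul, ih1, ih2]

/-! ### The square-divisor case -/

lemma K_nilpotent {q : ℕ} (x : ZMod q) (hx2 : x * x = 0) :
    ∀ i, K x (2 * i) = (-1) ^ i ∧
      K x (2 * i + 1) = (-1) ^ i * ((i + 1 : ℕ) : ZMod q) * x
  | 0 => by constructor <;> simp [K_zero, K_one]
  | i + 1 => by
      obtain ⟨ih1, ih2⟩ := K_nilpotent x hx2 i
      have e2 : K x (2 * i + 2) = (-1) ^ (i + 1) := by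
        have h := K_two_step x (2 * i)
        rw [ih1, ih2] at h
        rw [h]
        push_cast
        linear_combination ((-1 : ZMod q) ^ i * (((i : ℕ) : ZMod q) + 1)) * hx2
      have e3 : K x (2 * i + 3) = (-1) ^ (i + 1) * ((i + 2 : ℕ) : ZMod q) * x := by
        have h := K_two_step x (2 * i + 1)
        rw [show 2 * i + 1 + 2 = 2 * i + 3 from rfl, e2, ih2] at h
        rw [h]
        push_cast
        ring
      constructor
      · rw [show 2 * (i + 1) = 2 * i + 2 from by ring]; exact e2
      · rw [show 2 * (i + 1) + 1 = 2 * i + 3 from by ring,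
          show (i + 1) + 1 = i + 2 from rfl]
        exact e3

lemma psq_case {q p : ℕ} (hp3 : 3 ≤ p) (hodd : Odd p) (hq2 : 2 ≤ q)
    (hdvd : p * p ∣ q) : ¬ MonomiallyIrreducible q := by
  obtain ⟨t, ht⟩ := hdvd
  have ht0 : t ≠ 0 := by rintro rfl; omega
  have hpt : 0 < p * t := Nat.mul_pos (by omega) (Nat.pos_of_ne_zero ht0)
  haveI : NeZero q := ⟨by omega⟩
  set x : ZMod q := ((p * t : ℕ) : ZMod q) with hx
  have hx0 : x ≠ 0 := by
    rw [hx, Ne, ZMod.natCast_eq_zero_iff]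
    intro hdd
    have h1 : q ≤ p * t := Nat.le_of_dvd hpt hdd
    nlinarith [ht, hpt]
  have hxx : x * x = 0 := by
    rw [hx, ← Nat.cast_mul, ZMod.natCast_eq_zero_iff]
    exact ⟨t, by rw [ht]; ring⟩
  have hK := K_nilpotent x hxx
  have hpx : ((p : ℕ) : ZMod q) * x = 0 := by
    rw [hx, ← Nat.cast_mul, ZMod.natCast_eq_zero_iff]
    exact ⟨1, by rw [ht]; ring⟩
  refine master x hx0 (2 * (p - 1) + 1) 1 ?_ ?_ ?_ ?_ (by omega)
  · rw [(hK (p - 1)).2, show (p - 1) + 1 = p from by omega, mul_assoc, hpx,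
      mul_zero]
  · right
    rw [show 2 * (p - 1) + 1 + 1 = 2 * p from by omega, (hK p).1]
    exact Odd.neg_one_pow hodd
  · rintro j hj ⟨hz, -⟩
    haveI : Fact (1 < q) := ⟨by omega⟩
    rcases Nat.even_or_odd j with ⟨i, hi⟩ | ⟨i, hi⟩
    · rw [show j = 2 * i from by omega, (hK i).1] at hz
      rcases neg_one_pow_eq_or (ZMod q) i with h | h <;> rw [h] at hz
      · exact one_ne_zero hz
      · rw [neg_eq_zero] at hz; exact one_ne_zero hz
    · have hip : i < p - 1 := by omega
      rw [show j = 2 * i + 1 from by omega, (hK i).2] at hz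
      have h2 : ((i + 1 : ℕ) : ZMod q) * x = 0 := by
        rcases neg_one_pow_eq_or (ZMod q) i with h | h <;> rw [h] at hz
        · rwa [one_mul] at hz
        · rw [neg_one_mul, neg_mul, neg_eq_zero] at hz; exact hz
      rw [hx, ← Nat.cast_mul, ZMod.natCast_eq_zero_iff] at h2
      have h3 : p * (p * t) ∣ (i + 1) * (p * t) := by
        rw [show p * (p * t) = p * p * t from by ring, ← ht]; exact h2
      have h4 : p ∣ i + 1 := (Nat.mul_dvd_mul_iff_right hpt).mp h3
      have h5 := Nat.le_of_dvd (by omega) h4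
      omega
  · right
    rw [show (1 : ℕ) + 1 = 2 * 1 from rfl, (hK 1).1, pow_one]

/-! ### The CRT case -/

lemma crt_case {p m : ℕ} (hp2 : 2 ≤ p) (hm3 : 3 ≤ m) (cop : Nat.Coprime p m)
    (k₀ : ZMod p) (hk₀ : k₀ ≠ 0)
    (F1a : K k₀ 41 = 0) (F1b : K k₀ 42 = 1) (F2 : K k₀ 7 = 1)
    (F3 : ∀ j, j < 41 → pt1 j = 0 →
      ¬(K k₀ j = 0 ∧ K k₀ (j + 1) = ((pt1 (j + 1) : ℤ) : ZMod p))) :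
    ¬ MonomiallyIrreducible (p * m) := by
  haveI : NeZero p := ⟨by omega⟩
  haveI : NeZero m := ⟨by omega⟩
  haveI : NeZero (p * m) := ⟨Nat.mul_ne_zero (by omega) (by omega)⟩
  haveI : Fact (1 < m) := ⟨by omega⟩
  obtain ⟨z, hz1, hz2⟩ := Nat.chineseRemainder cop k₀.val 1
  set f : ZMod (p * m) →+* ZMod p := ZMod.castHom (dvd_mul_right p m) (ZMod p)
    with hf
  set g : ZMod (p * m) →+* ZMod m := ZMod.castHom (dvd_mul_left m p) (ZMod m)
    with hg
  set k : ZMod (p * m) := (z : ZMod (p * m)) with hk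
  have hfk : f k = k₀ := by
    rw [hk, map_natCast, (ZMod.natCast_eq_natCast_iff z k₀.val p).mpr hz1,
      ZMod.natCast_zmod_val]
  have hgk : g k = 1 := by
    rw [hk, map_natCast, (ZMod.natCast_eq_natCast_iff z 1 m).mpr hz2,
      Nat.cast_one]
  have hinj : ∀ a b : ZMod (p * m), f a = f b → g a = g b → a = b := by
    intro a b h1 h2
    have h3 : f (a - b) = 0 := by rw [map_sub, h1, sub_self]
    have h4 : g (a - b) = 0 := by rw [map_sub, h2, sub_self]
    have h5 : (a - b) = (((a - b).val : ℕ) : ZMod (p * m)) :=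
      (ZMod.natCast_zmod_val _).symm
    rw [h5, map_natCast, ZMod.natCast_eq_zero_iff] at h3
    rw [h5, map_natCast, ZMod.natCast_eq_zero_iff] at h4
    have h6 : p * m ∣ (a - b).val := Nat.Coprime.mul_dvd_of_dvd_of_dvd cop h3 h4
    have h7 : a - b = 0 := by
      rw [h5, ZMod.natCast_eq_zero_iff]; exact h6
    exact sub_eq_zero.mp h7
  have hKf : ∀ j, f (K k j) = K k₀ j := fun j => by
    rw [(K_map f k j).1, hfk]
  have hKg : ∀ j, g (K k j) = ((pt1 j : ℤ) : ZMod m) := fun j => by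
    rw [(K_map g k j).1, hgk, (K_one_pattern m j).1]
  have h10 : (1 : ZMod m) ≠ 0 := one_ne_zero
  have hm2 : ((2 : ℕ) : ZMod m) ≠ 0 := by
    rw [Ne, ZMod.natCast_eq_zero_iff]
    intro h; have := Nat.le_of_dvd (by norm_num) h; omega
  have h1m1 : (1 : ZMod m) ≠ -1 := by
    intro h
    refine hm2 ?_
    push_cast
    linear_combination h
  have hm1_0 : (-1 : ZMod m) ≠ 0 := by
    intro h
    apply h10
    rw [← neg_neg (1 : ZMod m), h, neg_zero]
  have hkne : k ≠ 0 := by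
    intro h
    apply hk₀
    rw [← hfk, h, map_zero]
  refine master k hkne 41 6 ?_ (Or.inl ?_) ?_ (Or.inl ?_) (by omega)
  · refine hinj _ _ ?_ ?_
    · rw [hKf 41, F1a, map_zero]
    · rw [hKg 41, map_zero]; norm_num [pt1]
  · refine hinj _ _ ?_ ?_
    · rw [hKf 42, F1b, map_one]
    · rw [hKg 42, map_one]; norm_num [pt1]
  · rintro j hj ⟨hz0, hs⟩
    have hfz : K k₀ j = 0 := by rw [← hKf j, hz0, map_zero]
    have hgz : ((pt1 j : ℤ) : ZMod m) = 0 := by rw [← hKg j, hz0, map_zero]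
    have hptj : pt1 j = 0 := by
      rcases pt1_cases j with h | h | h
      · exact h
      · rw [h] at hgz; push_cast at hgz; exact absurd hgz h10
      · rw [h] at hgz; push_cast at hgz; exact absurd hgz hm1_0
    rcases hs with hs | hs
    · have hgs : ((pt1 (j + 1) : ℤ) : ZMod m) = 1 := by
        rw [← hKg (j + 1), hs, map_one]
      have hp1 : pt1 (j + 1) = 1 := by
        rcases pt1_cases (j + 1) with h | h | h
        · rw [h] at hgs; push_cast at hgs; exact absurd hgs.symm h10
        · exact h
        · rw [h] at hgs; push_cast at hgs; exact absurd hgs.symm h1m1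
      refine F3 j hj hptj ⟨hfz, ?_⟩
      rw [← hKf (j + 1), hs, map_one, hp1]
      norm_num
    · have hgs : ((pt1 (j + 1) : ℤ) : ZMod m) = -1 := by
        rw [← hKg (j + 1), hs, map_neg, map_one]
      have hp1 : pt1 (j + 1) = -1 := by
        rcases pt1_cases (j + 1) with h | h | h
        · rw [h] at hgs; push_cast at hgs; exact absurd hgs.symm hm1_0
        · rw [h] at hgs; push_cast at hgs; exact absurd hgs h1m1
        · exact h
      refine F3 j hj hptj ⟨hfz, ?_⟩
      rw [← hKf (j + 1), hs, map_neg, map_one, hp1]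
      norm_num
  · refine hinj _ _ ?_ ?_
    · rw [hKf 7, F2, map_one]
    · rw [hKg 7, map_one]; norm_num [pt1]

/-! ### Per-prime wrapper -/

lemma per_prime (p : ℕ) (hp : p.Prime) (hp13 : 13 ≤ p) (k₀ : ZMod p)
    (x2 : ZMod (2 * p))
    (hc : k₀ ≠ 0 ∧ (kaux k₀ 41).1 = 0 ∧ (kaux k₀ 41).2 = 1 ∧
      (kaux k₀ 7).1 = 1 ∧
      (∀ j, j < 41 → pt1 j = 0 →
        ¬((kaux k₀ j).1 = 0 ∧ (kaux k₀ j).2 = ptz p (j + 1))) ∧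
      x2 ≠ 0 ∧ (kaux x2 20).1 = 0 ∧
      ((kaux x2 20).2 = 1 ∨ (kaux x2 20).2 = -1) ∧
      ((kaux x2 7).1 = 1 ∨ (kaux x2 7).1 = -1) ∧
      (∀ j, j < 20 →
        ¬((kaux x2 j).1 = 0 ∧ ((kaux x2 j).2 = 1 ∨ (kaux x2 j).2 = -1))))
    (N : ℕ) (hN : 2 ≤ N) (hnp : ¬ N.Prime) (hdvd : p ∣ N) :
    ¬ MonomiallyIrreducible N := by
  obtain ⟨h1, h2, h3, h4, h5, h6, h7, h8, h9, h10⟩ := hc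
  simp only [kaux_eq] at h2 h3 h4 h5 h7 h8 h9 h10
  have hp3 : 3 ≤ p := by omega
  by_cases hsq : p * p ∣ N
  · exact psq_case hp3 (hp.odd_of_ne_two (by omega)) hN hsq
  · obtain ⟨m, hm⟩ : ∃ m, N = p * m := ⟨N / p, (Nat.mul_div_cancel' hdvd).symm⟩
    have hm0 : m ≠ 0 := by
      rintro h; rw [h, Nat.mul_zero] at hm; omega
    have hm1 : m ≠ 1 := by
      rintro h; rw [h, Nat.mul_one] at hm; exact hnp (hm ▸ hp)
    have hpm : ¬ p ∣ m := fun hh => hsq (hm ▸ mul_dvd_mul_left p hh)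
    have cop : Nat.Coprime p m := (Nat.Prime.coprime_iff_not_dvd hp).mpr hpm
    by_cases hm2 : m = 2
    · rw [hm, hm2, Nat.mul_comm]
      exact master x2 h6 20 6 h7 h8 h10 h9 (by omega)
    · have hm3 : 3 ≤ m := by omega
      have hp2 : 2 ≤ p := by omega
      rw [hm]
      refine crt_case hp2 hm3 cop k₀ h1 h2 h3 h4 ?_
      intro j hj hptj hcon
      refine h5 j hj hptj ⟨hcon.1, ?_⟩
      rw [ptz_eq]
      exact hcon.2

end Aux

theorem stmt9 (N p : ℕ) (hN : 2 ≤ N) (hnp : ¬ N.Prime) (hp : p.Prime)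
    (hdvd : p ∣ N)
    (h : p ∈ ({13, 43, 83, 197, 293, 307, 547, 587, 643, 757, 797, 827, 853,
      883} : Set ℕ)) :
    ¬ MonomiallyIrreducible N := by
  have h' : p = 13 ∨ p = 43 ∨ p = 83 ∨ p = 197 ∨ p = 293 ∨ p = 307 ∨ p = 547 ∨
      p = 587 ∨ p = 643 ∨ p = 757 ∨ p = 797 ∨ p = 827 ∨ p = 853 ∨ p = 883 := by
    simpa using h
  rcases h' with rfl | rfl | rfl | rfl | rfl | rfl | rfl | rfl | rfl | rfl |
    rfl | rfl | rfl | rfl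
  · exact per_prime 13 (by norm_num) (by norm_num) 10 3 (by decide) N hN hnp hdvd
  · exact per_prime 43 (by norm_num) (by norm_num) 8 15 (by decide) N hN hnp hdvd
  · exact per_prime 83 (by norm_num) (by norm_num) 10 15 (by decide) N hN hnp hdvd
  · exact per_prime 197 (by norm_num) (by norm_num) 158 39 (by decide) N hN hnp hdvd
  · exact per_prime 293 (by norm_num) (by norm_num) 277 39 (by decide) N hN hnp hdvd
  · exact per_prime 307 (by norm_num) (by norm_num) 283 63 (by decide) N hN hnp hdvd
  · exact per_prime 547 (by norm_num) (by norm_num) 54 179 (by decide) N hN hnp hdvd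
  · exact per_prime 587 (by norm_num) (by norm_num) 524 63 (by decide) N hN hnp hdvd
  · exact per_prime 643 (by norm_num) (by norm_num) 20 245 (by decide) N hN hnp hdvd
  · exact per_prime 757 (by norm_num) (by norm_num) 136 431 (by decide) N hN hnp hdvd
  · exact per_prime 797 (by norm_num) (by norm_num) 100 363 (by decide) N hN hnp hdvd
  · exact per_prime 827 (by norm_num) (by norm_num) 63 63 (by decide) N hN hnp hdvd
  · exact per_prime 853 (by norm_num) (by norm_num) 700 153 (by decide) N hN hnp hdvd
  · exact per_prime 883 (by norm_num) (by norm_num) 120 391 (by decide) N hN hnp hdvd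
end Monomial
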